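/- Let (G,p) be a tensegrity framework and let Ω be a proper positive semidefinite stress matrix of (G,p). Then Ω is a proper stress matrix for every tensegrity framework (G,p') dominated by (G,p); in particular, if P' is the configuration matrix of (G,p') with centroid at the origin, then Ω P' = 0. -/

import Mathlib

open Matrix BigOperators

noncomputable section

/-- Squared Euclidean distance between two points of `ℝ^r`. -/
def sqDist {r : ℕ} (x y : Fin r → ℝ) : ℝ := ∑ k, (x k - y k) ^ 2

/-- `(G,q)` is dominated by `(G,p)`, where the edges of `G` are partitioned into
bars `B`, cables `C` and struts `S`. -/
def Dominates {n r s : ℕ} (B C S : Set (Fin n × Fin n))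
    (p : Fin n → Fin r → ℝ) (q : Fin n → Fin s → ℝ) : Prop :=
  (∀ e ∈ B, sqDist (q e.1) (q e.2) = sqDist (p e.1) (p e.2)) ∧
  (∀ e ∈ C, sqDist (q e.1) (q e.2) ≤ sqDist (p e.1) (p e.2)) ∧
  (∀ e ∈ S, sqDist (p e.1) (p e.2) ≤ sqDist (q e.1) (q e.2))

/-- `(G,q)` is congruent to `(G,p)`. -/
def FrameworkCongruent {n r s : ℕ} (p : Fin n → Fin r → ℝ) (q : Fin n → Fin s → ℝ) : Prop :=
  ∀ i j, sqDist (q i) (q j) = sqDist (p i) (p j)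

/-- `(G,p)` is universally rigid: every framework `(G,q)` in any dimension `s`
dominated by `(G,p)` is congruent to `(G,p)`. -/
def UniversallyRigid {n r : ℕ} (B C S : Set (Fin n × Fin n))
    (p : Fin n → Fin r → ℝ) : Prop :=
  ∀ (s : ℕ) (q : Fin n → Fin s → ℝ), Dominates B C S p q → FrameworkCongruent p q

/-- `(G,q)` is affinely-dominated by `(G,p)`: dominated and `q^i = A p^i + b`. -/
def AffinelyDominated {n r : ℕ} (B C S : Set (Fin n × Fin n))
    (p q : Fin n → Fin r → ℝ) : Prop :=
  Dominates B C S p q ∧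
  ∃ (A : Matrix (Fin r) (Fin r) ℝ) (b : Fin r → ℝ), ∀ i, q i = A.mulVec (p i) + b

/-- `ω` is an equilibrium stress of the framework with edge set `E` and configuration `p`. -/
def IsStress {n r : ℕ} (E : Set (Fin n × Fin n)) (p : Fin n → Fin r → ℝ)
    (ω : Fin n → Fin n → ℝ) : Prop :=
  (∀ i j, ω i j = ω j i) ∧ (∀ i j, (i, j) ∉ E → ω i j = 0) ∧
  (∀ i : Fin n, ∑ j, ω i j • (p i - p j) = 0)

/-- A stress is proper if `ω_ij ≥ 0` on cables and `ω_ij ≤ 0` on struts. -/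
def IsProperStress {n : ℕ} (C S : Set (Fin n × Fin n)) (ω : Fin n → Fin n → ℝ) : Prop :=
  (∀ e ∈ C, 0 ≤ ω e.1 e.2) ∧ (∀ e ∈ S, ω e.1 e.2 ≤ 0)

/-- The stress matrix `Ω` associated to the stress `ω`. -/
def stressMatrix {n : ℕ} (ω : Fin n → Fin n → ℝ) : Matrix (Fin n) (Fin n) ℝ :=
  Matrix.of fun i j => if i = j then ∑ k, ω i k else -ω i j

/-- `B`, `C`, `S` are the (symmetrically encoded) bars, cables and struts of a
simple connected tensegrity graph on `{1,…,n}`. -/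
def TensegrityGraph {n : ℕ} (B C S : Set (Fin n × Fin n)) : Prop :=
  (∀ i j, (i, j) ∈ B → (j, i) ∈ B) ∧ (∀ i j, (i, j) ∈ C → (j, i) ∈ C) ∧
  (∀ i j, (i, j) ∈ S → (j, i) ∈ S) ∧ (∀ i : Fin n, (i, i) ∉ B ∪ C ∪ S) ∧
  B ∩ C = ∅ ∧ B ∩ S = ∅ ∧ C ∩ S = ∅ ∧
  (SimpleGraph.fromRel fun i j => (i, j) ∈ B ∪ C ∪ S).Connected

/-- A set of points of `ℝ^r` is in general position if every `r+1` of them are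
affinely independent. -/
def SetInGeneralPosition {r : ℕ} (A : Set (Fin r → ℝ)) : Prop :=
  ∀ T : Finset (Fin r → ℝ), ↑T ⊆ A → T.card = r + 1 →
    AffineIndependent ℝ (fun x : {x // x ∈ T} => (x : Fin r → ℝ))

/-- `Z` is a Gale matrix of the configuration with matrix `P`: its columns form a
basis of the null space of the matrix obtained by stacking `Pᵀ` on top of `eᵀ`. -/
def IsGaleMatrix {n r m : ℕ} (P : Matrix (Fin n) (Fin r) ℝ)
    (Z : Matrix (Fin n) (Fin m) ℝ) : Prop :=
  (∀ k, Pᵀ *ᵥ (fun i => Z i k) = 0) ∧ (∀ k, ∑ i, Z i k = 0) ∧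
  LinearIndependent ℝ (fun k i => Z i k) ∧
  ∀ v : Fin n → ℝ, Pᵀ *ᵥ v = 0 → ∑ i, v i = 0 →
    v ∈ Submodule.span ℝ (Set.range fun k i => Z i k)

/-- `Ω` is a stress matrix of the framework with edge set `E` and configuration
matrix `P` (with centroid at the origin): it is symmetric, vanishes on missing
edges, and satisfies `Pᵀ Ω = 0` and `Ω e = 0`. -/
def IsStressMatrix {n r : ℕ} (E : Set (Fin n × Fin n)) (P : Matrix (Fin n) (Fin r) ℝ)
    (Ω : Matrix (Fin n) (Fin n) ℝ) : Prop :=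
  Ω.IsSymm ∧ (∀ i j, i ≠ j → (i, j) ∉ E → Ω i j = 0) ∧
  Pᵀ * Ω = 0 ∧ Ω *ᵥ (fun _ => (1 : ℝ)) = 0

/-- The matrix `F^{ij} = (e^i - e^j)(e^i - e^j)ᵀ`. -/
def Fmat {n : ℕ} (i j : Fin n) : Matrix (Fin n) (Fin n) ℝ :=
  Matrix.vecMulVec (Pi.single i 1 - Pi.single j 1) (Pi.single i 1 - Pi.single j 1)

/-- The matrix `E^{ij} = e^i (e^j)ᵀ + e^j (e^i)ᵀ`. -/
def Emat {n : ℕ} (i j : Fin n) : Matrix (Fin n) (Fin n) ℝ :=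
  Matrix.vecMulVec (Pi.single i 1) (Pi.single j 1) +
    Matrix.vecMulVec (Pi.single j 1) (Pi.single i 1)

/-- The matrix `L^i = e^i eᵀ + e (e^i)ᵀ`. -/
def Lmat {n : ℕ} (i : Fin n) : Matrix (Fin n) (Fin n) ℝ :=
  Matrix.vecMulVec (Pi.single i 1) (fun _ => 1) +
    Matrix.vecMulVec (fun _ => 1) (Pi.single i 1)

/-- `ℰ(y) = Σ y_ij E^{ij}` (for `y` supported on the relevant pairs `i < j`). -/
def EscrY {n : ℕ} (y : Fin n → Fin n → ℝ) : Matrix (Fin n) (Fin n) ℝ :=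
  ∑ i, ∑ j, y i j • Emat i j

/-- The vector `x = -(1/n) ℰ(y) e + (1/(2n²)) (eᵀ ℰ(y) e) e`. -/
def xvec {n : ℕ} (y : Fin n → Fin n → ℝ) : Fin n → ℝ :=
  (-(1 / (n : ℝ))) • (EscrY y *ᵥ fun _ => (1 : ℝ)) +
    ((1 / (2 * (n : ℝ) ^ 2)) * ((fun _ => (1 : ℝ)) ⬝ᵥ (EscrY y *ᵥ fun _ => (1 : ℝ)))) •
      (fun _ : Fin n => (1 : ℝ))

/-!
For every configuration `q` with matrix `Q`, the stress energy `∑ ω_ij ‖q^i - q^j‖²` equals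
`2 tr(Qᵀ Ω Q)`. At `p` it vanishes because `Ω P = 0`; at a dominated `q` properness makes it
termwise no larger, so `tr(Qᵀ Ω Q) ≤ 0`. As `Ω ⪰ 0`, this forces `Ω Q = 0`, which is the
equilibrium condition for `ω` at `q`.
-/

open scoped ComplexOrder

theorem Matrix.PosSemidef.mul_eq_zero_of_trace_nonpos {𝕜 : Type*} [RCLike 𝕜] {m l : Type*}
    [Fintype m] [Fintype l] {A : Matrix l l 𝕜} (hA : A.PosSemidef) {Q : Matrix l m 𝕜}
    (h : (Qᴴ * A * Q).trace ≤ 0) : A * Q = 0 := by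
  have hQAQ := hA.conjTranspose_mul_mul_same Q
  have hzero : Qᴴ * A * Q = 0 := hQAQ.trace_eq_zero_iff.1 (le_antisymm h hQAQ.trace_nonneg)
  ext i k
  have hcol : A *ᵥ (fun j => Q j k) = 0 := by
    refine (hA.dotProduct_mulVec_zero_iff _).1 ?_
    have := congrFun (congrFun hzero k) k
    rwa [Matrix.mul_assoc, Matrix.mul_apply] at this
  exact congrFun hcol i

def stressEnergy {n r : ℕ} (ω : Fin n → Fin n → ℝ) (p : Fin n → Fin r → ℝ) : ℝ :=
  ∑ i, ∑ j, ω i j * sqDist (p i) (p j)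

section StressMatrix

variable {n : ℕ} {ω : Fin n → Fin n → ℝ}

lemma stressMatrix_eq_diagonal_sub (hω0 : ∀ i, ω i i = 0) :
    stressMatrix ω = diagonal (fun i => ∑ k, ω i k) - of ω := by
  ext i j
  by_cases h : i = j
  · subst h; simp [stressMatrix, hω0]
  · simp [stressMatrix, h]

lemma stressMatrix_mulVec_apply (hω0 : ∀ i, ω i i = 0) (x : Fin n → ℝ) (i : Fin n) :
    (stressMatrix ω *ᵥ x) i = ∑ j, ω i j * (x i - x j) := by
  rw [stressMatrix_eq_diagonal_sub hω0, sub_mulVec, Pi.sub_apply, mulVec_diagonal]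
  simp only [mul_sub, Finset.sum_sub_distrib, Finset.sum_mul]
  rfl

lemma stressMatrix_mul_eq_zero_iff (hω0 : ∀ i, ω i i = 0) {s : ℕ} (q : Fin n → Fin s → ℝ) :
    stressMatrix ω * of q = 0 ↔ ∀ i, ∑ j, ω i j • (q i - q j) = 0 := by
  have hentry : ∀ i k, (stressMatrix ω * of q) i k = (∑ j, ω i j • (q i - q j)) k := by
    intro i k
    rw [Matrix.mul_apply, Finset.sum_apply, ← dotProduct, ← mulVec,
      stressMatrix_mulVec_apply hω0]
    rfl
  constructor
  · intro h i
    ext k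
    rw [← hentry, h]
    rfl
  · intro h
    ext i k
    rw [hentry, h i]
    rfl

lemma two_mul_dotProduct_stressMatrix_mulVec (hsym : ∀ i j, ω i j = ω j i)
    (hω0 : ∀ i, ω i i = 0) (x : Fin n → ℝ) :
    2 * (x ⬝ᵥ stressMatrix ω *ᵥ x) = ∑ i, ∑ j, ω i j * (x i - x j) ^ 2 := by
  have hsplit : ∑ i, ∑ j, ω i j * (x i - x j) ^ 2
      = ∑ i, ∑ j, ω i j * (x i - x j) * x i + ∑ i, ∑ j, ω j i * (x j - x i) * x j := by
    rw [← Finset.sum_add_distrib]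
    refine Finset.sum_congr rfl fun i _ => ?_
    rw [← Finset.sum_add_distrib]
    refine Finset.sum_congr rfl fun j _ => ?_
    rw [hsym j i]
    ring
  rw [hsplit, Finset.sum_comm (f := fun i j => ω j i * (x j - x i) * x j), ← two_mul]
  simp only [dotProduct, stressMatrix_mulVec_apply hω0, Finset.mul_sum]
  exact Finset.sum_congr rfl fun i _ => Finset.sum_congr rfl fun j _ => by ring

lemma stressEnergy_eq_two_mul_trace (hsym : ∀ i j, ω i j = ω j i) (hω0 : ∀ i, ω i i = 0)
    {s : ℕ} (q : Fin n → Fin s → ℝ) :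
    stressEnergy ω q = 2 * ((of q)ᵀ * stressMatrix ω * of q).trace := by
  symm
  have hdiag : ∀ k, ((of q)ᵀ * stressMatrix ω * of q) k k
      = (fun i => q i k) ⬝ᵥ stressMatrix ω *ᵥ (fun i => q i k) := by
    intro k
    rw [Matrix.mul_assoc, Matrix.mul_apply]
    rfl
  simp only [trace, diag, hdiag, Finset.mul_sum, two_mul_dotProduct_stressMatrix_mulVec hsym hω0,
    stressEnergy, sqDist]
  rw [Finset.sum_comm]
  exact Finset.sum_congr rfl fun i _ => Finset.sum_comm

end StressMatrix

lemma stressEnergy_le_of_dominates {n r s : ℕ} {B C S : Set (Fin n × Fin n)}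
    {ω : Fin n → Fin n → ℝ} (hsupp : ∀ i j, (i, j) ∉ B ∪ C ∪ S → ω i j = 0)
    (hproper : IsProperStress C S ω) {p : Fin n → Fin r → ℝ} {q : Fin n → Fin s → ℝ}
    (hdom : Dominates B C S p q) : stressEnergy ω q ≤ stressEnergy ω p := by
  refine Finset.sum_le_sum fun i _ => Finset.sum_le_sum fun j _ => ?_
  by_cases hB : (i, j) ∈ B
  · rw [hdom.1 (i, j) hB]
  by_cases hC : (i, j) ∈ C
  · exact mul_le_mul_of_nonneg_left (hdom.2.1 (i, j) hC) (hproper.1 (i, j) hC)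
  by_cases hS : (i, j) ∈ S
  · exact mul_le_mul_of_nonpos_left (hdom.2.2 (i, j) hS) (hproper.2 (i, j) hS)
  rw [hsupp i j (by simp [hB, hC, hS])]
  simp

/-- a proper PSD stress matrix of `(G,p)` is a proper stress matrix of
every framework `(G,p')` dominated by `(G,p)`; in particular `Ω P' = 0`. -/
theorem statement11 {n r : ℕ}
    (B C S : Set (Fin n × Fin n)) (hG : TensegrityGraph B C S)
    (p : Fin n → Fin r → ℝ)
    (ω : Fin n → Fin n → ℝ)
    (hstress : IsStress (B ∪ C ∪ S) p ω)
    (hproper : IsProperStress C S ω)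
    (hpsd : (stressMatrix ω).PosSemidef) :
    ∀ (s : ℕ) (p' : Fin n → Fin s → ℝ), Dominates B C S p p' →
      (∀ k, ∑ i, p' i k = 0) →
      IsStress (B ∪ C ∪ S) p' ω ∧ stressMatrix ω * Matrix.of p' = 0 := by
  intro s p' hdom _
  obtain ⟨hsym, hsupp, hequil⟩ := hstress
  have hω0 : ∀ i, ω i i = 0 := fun i => hsupp i i (hG.2.2.2.1 i)
  have hΩp : stressMatrix ω * of p = 0 := (stressMatrix_mul_eq_zero_iff hω0 p).2 hequil
  have hΩp' : stressMatrix ω * of p' = 0 := by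
    refine hpsd.mul_eq_zero_of_trace_nonpos ?_
    have henergy := stressEnergy_le_of_dominates hsupp hproper hdom
    rw [stressEnergy_eq_two_mul_trace hsym hω0, stressEnergy_eq_two_mul_trace hsym hω0,
      Matrix.mul_assoc (of p)ᵀ, hΩp, Matrix.mul_zero, trace_zero, mul_zero] at henergy
    rw [conjTranspose_eq_transpose_of_trivial]
    linarith
  exact ⟨⟨hsym, hsupp, (stressMatrix_mul_eq_zero_iff hω0 p').1 hΩp'⟩, hΩp'⟩
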